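/- For a compact quasihypermetric space (X, d), the following are equivalent: (1) M(X) < ∞; (2) there exists a sequence μ_n in M₁(X) with I(μ_n) → M(X); (3) there exists a d-invariant sequence in M₁(X) (a Cauchy sequence μ_n in the energy seminorm with d_{μ_n} converging uniformly to a constant function). -/

import Mathlib

open MeasureTheory

/-- Integral of a function against a finite signed Borel measure, via Jordan decomposition. -/
noncomputable def sInt {X : Type*} [MeasurableSpace X] (μ : SignedMeasure X) (f : X → ℝ) : ℝ :=
  (∫ x, f x ∂μ.toJordanDecomposition.posPart) - ∫ x, f x ∂μ.toJordanDecomposition.negPart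

/-- Energy `I(μ, ν) = ∫∫ d(x,y) dμ(x) dν(y)` with respect to a kernel `d`. -/
noncomputable def en {X : Type*} [MeasurableSpace X] (d : X → X → ℝ)
    (μ ν : SignedMeasure X) : ℝ :=
  sInt μ (fun x => sInt ν (fun y => d x y))

/-- The potential `d_μ(x) = ∫ d(x,y) dμ(y)`. -/
noncomputable def dPot {X : Type*} [MeasurableSpace X] (d : X → X → ℝ)
    (μ : SignedMeasure X) (x : X) : ℝ :=
  sInt μ (fun y => d x y)

/-- The set of energies `I(μ)` of signed Borel measures of total mass one. -/
noncomputable def MSet (X : Type*) [MetricSpace X] [MeasurableSpace X] : Set ℝ :=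
  {r | ∃ μ : SignedMeasure X, μ Set.univ = (1 : ℝ) ∧ en (fun x y => dist x y) μ μ = r}

/-!
The energy `I(μ, ν)` is a symmetric bilinear form on finite signed measures, and
quasihypermetricity says that it is negative semidefinite on measures of mass zero, so that
`‖σ‖ = √(-I(σ))` obeys Cauchy–Schwarz there.

If `M = sup I < ∞` and `I(μₙ) → M`, the midpoint of `μ_p` and `μ_q` has energy at most `M`, which
gives `‖μ_p - μ_q‖² ≤ 2(M - I(μ_p)) + 2(M - I(μ_q))`; and since `t ↦ I(μₙ + t(δₓ - μₙ))` is a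
quadratic bounded by `M`, its discriminant yields `(M - d_{μₙ}(x))² ≤ (M - I(μₙ)) M`. So `(μₙ)` is
`d`-invariant with constant `M`.

Conversely, let `(μₙ)` be `d`-invariant with constant `c` and `‖μ_N - μₙ‖ ≤ 1` for `n ≥ N`. For
`ν ∈ M₁(X)` put `σ = ν - μ_N`. Then `I(σ, μₙ) = ∫ (d_{μₙ} - c) dσ → 0`, and Cauchy–Schwarz against
`μ_N - μₙ` gives `I(σ, μ_N) ≤ ‖σ‖`, whence `I(ν) ≤ I(μ_N) + 2‖σ‖ - ‖σ‖² ≤ I(μ_N) + 1`.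
-/

open Filter Topology

section SignedIntegral

variable {X : Type*} [MeasurableSpace X]

lemma sInt_const (μ : SignedMeasure X) (c : ℝ) : sInt μ (fun _ => c) = c * μ Set.univ := by
  rw [sInt, integral_const, integral_const, μ.apply_eq_posPart_real_sub_negPart_real .univ,
    smul_eq_mul, smul_eq_mul, mul_sub, mul_comm c, mul_comm c]

lemma abs_sInt_le (μ : SignedMeasure X) {f : X → ℝ} {C : ℝ} (hC : ∀ x, |f x| ≤ C) :
    |sInt μ f| ≤ C * μ.totalVariation.real Set.univ := by
  have hbound (a : Measure X) [IsFiniteMeasure a] : |∫ x, f x ∂a| ≤ C * a.real Set.univ :=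
    norm_integral_le_of_norm_le_const (.of_forall fun x => (Real.norm_eq_abs (f x)).trans_le (hC x))
  rw [SignedMeasure.totalVariation, measureReal_add_apply, mul_add, sInt]
  exact (abs_sub _ _).trans (add_le_add (hbound _) (hbound _))

variable [TopologicalSpace X] [CompactSpace X] [OpensMeasurableSpace X]

lemma Continuous.integrable_of_compactSpace {f : X → ℝ} (hf : Continuous f) (a : Measure X)
    [IsFiniteMeasure a] : Integrable f a :=
  hf.integrable_of_hasCompactSupport (.of_compactSpace f)

lemma sInt_eq_of_apply_eq (μ : SignedMeasure X) (a b : Measure X) [IsFiniteMeasure a]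
    [IsFiniteMeasure b] (h : ∀ s, MeasurableSet s → μ s = a.real s - b.real s)
    {f : X → ℝ} (hf : Continuous f) :
    sInt μ f = ∫ x, f x ∂a - ∫ x, f x ∂b := by
  set p := μ.toJordanDecomposition.posPart
  set n := μ.toJordanDecomposition.negPart
  have hsum : a + n = b + p := by
    ext s hs
    rw [← ENNReal.toReal_eq_toReal_iff' (measure_ne_top _ s) (measure_ne_top _ s)]
    simp only [Measure.add_apply, ENNReal.toReal_add (measure_ne_top _ _) (measure_ne_top _ _)]
    have := μ.apply_eq_posPart_real_sub_negPart_real hs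
    simp only [Measure.real] at this h
    linarith [h s hs]
  have := congrArg (fun ρ => ∫ x, f x ∂ρ) hsum
  simp only [integral_add_measure (hf.integrable_of_compactSpace _)
    (hf.integrable_of_compactSpace _)] at this
  rw [sInt]
  linarith

lemma sInt_toSignedMeasure (a : Measure X) [IsFiniteMeasure a] {f : X → ℝ} (hf : Continuous f) :
    sInt a.toSignedMeasure f = ∫ x, f x ∂a := by
  rw [sInt_eq_of_apply_eq _ a 0 (fun s hs => ?_) hf, integral_zero_measure, sub_zero]
  simp [Measure.toSignedMeasure_apply_measurable hs]

lemma sInt_add_measure (μ ν : SignedMeasure X) {f : X → ℝ} (hf : Continuous f) :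
    sInt (μ + ν) f = sInt μ f + sInt ν f := by
  rw [sInt_eq_of_apply_eq (μ + ν)
      (μ.toJordanDecomposition.posPart + ν.toJordanDecomposition.posPart)
      (μ.toJordanDecomposition.negPart + ν.toJordanDecomposition.negPart) (fun s hs => ?_) hf,
    integral_add_measure (hf.integrable_of_compactSpace _) (hf.integrable_of_compactSpace _),
    integral_add_measure (hf.integrable_of_compactSpace _) (hf.integrable_of_compactSpace _),
    sInt, sInt]
  · ring
  · rw [add_apply, μ.apply_eq_posPart_real_sub_negPart_real hs,
      ν.apply_eq_posPart_real_sub_negPart_real hs, measureReal_add_apply, measureReal_add_apply]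
    ring

lemma sInt_neg_measure (μ : SignedMeasure X) {f : X → ℝ} (hf : Continuous f) :
    sInt (-μ) f = -sInt μ f := by
  rw [sInt_eq_of_apply_eq (-μ) μ.toJordanDecomposition.negPart μ.toJordanDecomposition.posPart
    (fun s hs => ?_) hf, sInt, neg_sub]
  · rw [neg_apply, μ.apply_eq_posPart_real_sub_negPart_real hs, neg_sub]

lemma sInt_smul_measure_of_nonneg {r : ℝ} (hr : 0 ≤ r) (μ : SignedMeasure X) {f : X → ℝ}
    (hf : Continuous f) : sInt (r • μ) f = r * sInt μ f := by
  lift r to NNReal using hr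
  rw [sInt_eq_of_apply_eq ((r : ℝ) • μ) (r • μ.toJordanDecomposition.posPart)
      (r • μ.toJordanDecomposition.negPart) (fun s hs => ?_) hf,
    integral_smul_nnreal_measure, integral_smul_nnreal_measure, sInt, NNReal.smul_def,
    NNReal.smul_def, smul_eq_mul, smul_eq_mul, mul_sub]
  · rw [smul_apply, measureReal_nnreal_smul_apply, measureReal_nnreal_smul_apply, ← mul_sub,
      ← μ.apply_eq_posPart_real_sub_negPart_real hs, smul_eq_mul]

lemma sInt_smul_measure (r : ℝ) (μ : SignedMeasure X) {f : X → ℝ} (hf : Continuous f) :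
    sInt (r • μ) f = r * sInt μ f := by
  rcases le_or_gt 0 r with hr | hr
  · exact sInt_smul_measure_of_nonneg hr μ hf
  · rw [show r • μ = -((-r) • μ) by ext s; simp, sInt_neg_measure _ hf,
      sInt_smul_measure_of_nonneg (neg_nonneg.2 hr.le) μ hf]
    ring

lemma sInt_sub_measure (μ ν : SignedMeasure X) {f : X → ℝ} (hf : Continuous f) :
    sInt (μ - ν) f = sInt μ f - sInt ν f := by
  rw [sub_eq_add_neg, sInt_add_measure μ (-ν) hf, sInt_neg_measure ν hf, sub_eq_add_neg]

lemma sInt_sub (μ : SignedMeasure X) {f g : X → ℝ} (hf : Continuous f) (hg : Continuous g) :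
    sInt μ (fun x => f x - g x) = sInt μ f - sInt μ g := by
  have hf' := hf.integrable_of_compactSpace
  have hg' := hg.integrable_of_compactSpace
  rw [sInt, sInt, sInt, integral_sub (hf' _) (hg' _), integral_sub (hf' _) (hg' _)]
  ring

lemma tendsto_sInt_of_tendstoUniformly {ι : Type*} {l : Filter ι} (μ : SignedMeasure X)
    {F : ι → X → ℝ} {f : X → ℝ} (hF : ∀ i, Continuous (F i)) (hf : Continuous f)
    (hFf : TendstoUniformly F f l) : Tendsto (fun i => sInt μ (F i)) l (𝓝 (sInt μ f)) := by
  set V := μ.totalVariation.real Set.univ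
  rw [Metric.tendsto_nhds]
  intro ε hε
  filter_upwards [Metric.tendstoUniformly_iff.1 hFf (ε / (V + 1)) (by positivity)] with i hi
  have hdiff : |sInt μ (fun x => F i x - f x)| ≤ ε / (V + 1) * V :=
    abs_sInt_le μ fun x => by rw [abs_sub_comm]; exact (hi x).le
  rw [sInt_sub μ (hF i) hf] at hdiff
  rw [Real.dist_eq]
  calc _ ≤ ε / (V + 1) * V := hdiff
    _ < ε := by
      rw [div_mul_eq_mul_div, div_lt_iff₀ (by positivity)]
      nlinarith

end SignedIntegral

lemma en_eq_sInt_dPot {X : Type*} [MeasurableSpace X] (d : X → X → ℝ) (μ ν : SignedMeasure X) :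
    en d μ ν = sInt μ (dPot d ν) := rfl

section Energy

variable {X : Type*} [PseudoMetricSpace X] [CompactSpace X] [MeasurableSpace X]
  [OpensMeasurableSpace X]

lemma continuous_dPot_dist (ν : SignedMeasure X) : Continuous (dPot dist ν) := by
  have h (a : Measure X) [IsFiniteMeasure a] : Continuous fun x => ∫ y, dist x y ∂a := by
    simpa using continuous_parametric_integral_of_continuous (μ := a) continuous_dist
      isCompact_univ
  exact (h _).sub (h _)

lemma dPot_dist_sub (μ ν : SignedMeasure X) (x : X) :
    dPot dist (μ - ν) x = dPot dist μ x - dPot dist ν x :=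
  sInt_sub_measure μ ν (continuous_const.dist continuous_id)

lemma en_dist_add_left (μ ν ρ : SignedMeasure X) :
    en dist (μ + ν) ρ = en dist μ ρ + en dist ν ρ :=
  sInt_add_measure μ ν (continuous_dPot_dist ρ)

lemma en_dist_sub_left (μ ν ρ : SignedMeasure X) :
    en dist (μ - ν) ρ = en dist μ ρ - en dist ν ρ :=
  sInt_sub_measure μ ν (continuous_dPot_dist ρ)

lemma en_dist_smul_left (r : ℝ) (μ ρ : SignedMeasure X) :
    en dist (r • μ) ρ = r * en dist μ ρ :=
  sInt_smul_measure r μ (continuous_dPot_dist ρ)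

lemma en_dist_sub_right (ρ μ ν : SignedMeasure X) :
    en dist ρ (μ - ν) = en dist ρ μ - en dist ρ ν := by
  rw [en_eq_sInt_dPot, funext (dPot_dist_sub μ ν)]
  exact sInt_sub ρ (continuous_dPot_dist μ) (continuous_dPot_dist ν)

lemma en_dist_toSignedMeasure (a b : Measure X) [IsFiniteMeasure a] [IsFiniteMeasure b] :
    en dist a.toSignedMeasure b.toSignedMeasure = ∫ x, ∫ y, dist x y ∂b ∂a := by
  rw [en_eq_sInt_dPot, sInt_toSignedMeasure a (continuous_dPot_dist _)]
  congr with x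
  exact sInt_toSignedMeasure b (continuous_const.dist continuous_id)

lemma en_dist_toSignedMeasure_comm (a b : Measure X) [IsFiniteMeasure a] [IsFiniteMeasure b] :
    en dist a.toSignedMeasure b.toSignedMeasure = en dist b.toSignedMeasure a.toSignedMeasure := by
  rw [en_dist_toSignedMeasure, en_dist_toSignedMeasure,
    integral_integral_swap (continuous_dist.integrable_of_compactSpace _)]
  simp_rw [dist_comm]

lemma en_dist_comm (μ ν : SignedMeasure X) : en dist μ ν = en dist ν μ := by
  rw [← μ.toSignedMeasure_toJordanDecomposition, ← ν.toSignedMeasure_toJordanDecomposition]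
  simp only [JordanDecomposition.toSignedMeasure, en_dist_sub_left, en_dist_sub_right,
    en_dist_toSignedMeasure_comm μ.toJordanDecomposition.posPart,
    en_dist_toSignedMeasure_comm μ.toJordanDecomposition.negPart]
  ring

lemma en_dist_add_right (ρ μ ν : SignedMeasure X) :
    en dist ρ (μ + ν) = en dist ρ μ + en dist ρ ν := by
  rw [en_dist_comm, en_dist_add_left, en_dist_comm μ, en_dist_comm ν]

lemma en_dist_smul_right (r : ℝ) (ρ μ : SignedMeasure X) :
    en dist ρ (r • μ) = r * en dist ρ μ := by
  rw [en_dist_comm, en_dist_smul_left, en_dist_comm]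

lemma en_dist_add_smul_self (μ σ : SignedMeasure X) (t : ℝ) :
    en dist (μ + t • σ) (μ + t • σ)
      = en dist μ μ + 2 * t * en dist μ σ + t ^ 2 * en dist σ σ := by
  rw [en_dist_add_left, en_dist_add_right, en_dist_add_right, en_dist_smul_left,
    en_dist_smul_left, en_dist_smul_right, en_dist_smul_right, en_dist_comm σ μ]
  ring

lemma en_dist_dirac_left (x : X) (ν : SignedMeasure X) :
    en dist (Measure.dirac x).toSignedMeasure ν = dPot dist ν x := by
  rw [en_eq_sInt_dPot, sInt_toSignedMeasure _ (continuous_dPot_dist ν),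
    integral_dirac' _ _ (continuous_dPot_dist ν).stronglyMeasurable]

lemma en_dist_dirac_self (x : X) :
    en dist (Measure.dirac x).toSignedMeasure (Measure.dirac x).toSignedMeasure = 0 := by
  have hdist : Continuous fun y => dist x y := continuous_const.dist continuous_id
  rw [en_dist_dirac_left, dPot, sInt_toSignedMeasure _ hdist,
    integral_dirac' _ _ hdist.stronglyMeasurable, dist_self]

end Energy

def IsQuasihypermetric (X : Type*) [PseudoMetricSpace X] [MeasurableSpace X] : Prop :=
  ∀ ν : SignedMeasure X, ν Set.univ = 0 → en dist ν ν ≤ 0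

section Maximal

variable {X : Type*} [PseudoMetricSpace X] [CompactSpace X] [MeasurableSpace X]
  [OpensMeasurableSpace X]

lemma sq_en_dist_le_of_forall_le {μ σ : SignedMeasure X} {m : ℝ}
    (h : ∀ t : ℝ, en dist (μ + t • σ) (μ + t • σ) ≤ m) :
    en dist μ σ ^ 2 ≤ -en dist σ σ * (m - en dist μ μ) := by
  have hdisc := discrim_le_zero (a := -en dist σ σ) (b := -2 * en dist μ σ)
    (c := m - en dist μ μ) fun t => by linarith [h t, en_dist_add_smul_self μ σ t]
  rw [discrim] at hdisc
  linarith

lemma IsQuasihypermetric.sq_en_dist_le_mul (hq : IsQuasihypermetric X) {σ τ : SignedMeasure X}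
    (hσ : σ Set.univ = 0) (hτ : τ Set.univ = 0) :
    en dist σ τ ^ 2 ≤ en dist σ σ * en dist τ τ := by
  have := sq_en_dist_le_of_forall_le (m := 0) fun t => hq (σ + t • τ) (by simp [hσ, hτ])
  linarith

lemma neg_en_dist_sub_le {m : ℝ} (hub : ∀ ν : SignedMeasure X, ν Set.univ = 1 → en dist ν ν ≤ m)
    {μ ν : SignedMeasure X} (hμ : μ Set.univ = 1) (hν : ν Set.univ = 1) :
    -en dist (μ - ν) (μ - ν) ≤ 2 * (m - en dist μ μ) + 2 * (m - en dist ν ν) := by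
  have hmid := hub (ν + (1 / 2 : ℝ) • (μ - ν)) (by simp [hμ, hν])
  have hend := en_dist_add_smul_self ν (μ - ν) 1
  rw [one_smul, add_sub_cancel] at hend
  rw [en_dist_add_smul_self] at hmid
  linarith

lemma sq_sub_dPot_dist_le {m : ℝ}
    (hub : ∀ ν : SignedMeasure X, ν Set.univ = 1 → en dist ν ν ≤ m)
    {μ : SignedMeasure X} (hμ : μ Set.univ = 1) (x : X) :
    (m - dPot dist μ x) ^ 2 ≤ (m - en dist μ μ) * m := by
  set σ := (Measure.dirac x).toSignedMeasure - μ
  have hfirst := sq_en_dist_le_of_forall_le (μ := μ) (σ := σ) (m := m) fun t => hub _ (by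
    simp [σ, hμ, Measure.toSignedMeasure_apply_measurable MeasurableSet.univ])
  have hcross : en dist μ σ = dPot dist μ x - en dist μ μ := by
    rw [en_dist_sub_right, en_dist_comm, en_dist_dirac_left]
  have hself : en dist σ σ = -(2 * en dist μ σ + en dist μ μ) := by
    have := en_dist_add_smul_self μ σ 1
    rw [one_smul, add_sub_cancel, en_dist_dirac_self] at this
    linarith
  rw [hself, hcross] at hfirst
  nlinarith

end Maximal

section Sequences

variable {X : Type*} [PseudoMetricSpace X] [CompactSpace X] [MeasurableSpace X]
  [OpensMeasurableSpace X] {μ : ℕ → SignedMeasure X}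

lemma energy_cauchy_of_tendsto {m : ℝ}
    (hub : ∀ ν : SignedMeasure X, ν Set.univ = 1 → en dist ν ν ≤ m)
    (hμ : ∀ n, μ n Set.univ = 1) (hlim : Tendsto (fun n => en dist (μ n) (μ n)) atTop (𝓝 m))
    (ε : ℝ) (hε : 0 < ε) :
    ∃ N : ℕ, ∀ p ≥ N, ∀ q ≥ N, √(-en dist (μ p - μ q) (μ p - μ q)) < ε := by
  obtain ⟨N, hN⟩ := eventually_atTop.1
    (hlim.eventually (lt_mem_nhds (show m - ε ^ 2 / 4 < m by linarith [sq_pos_of_pos hε])))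
  refine ⟨N, fun p hp q hq => (Real.sqrt_lt' hε).2 ?_⟩
  linarith [neg_en_dist_sub_le hub (hμ p) (hμ q), hN p hp, hN q hq]

lemma tendstoUniformly_dPot_dist_of_tendsto {m : ℝ}
    (hub : ∀ ν : SignedMeasure X, ν Set.univ = 1 → en dist ν ν ≤ m)
    (hμ : ∀ n, μ n Set.univ = 1) (hlim : Tendsto (fun n => en dist (μ n) (μ n)) atTop (𝓝 m)) :
    TendstoUniformly (fun n x => dPot dist (μ n) x) (fun _ => m) atTop := by
  have hbound : Tendsto (fun n => √((m - en dist (μ n) (μ n)) * m)) atTop (𝓝 0) := by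
    simpa using ((hlim.const_sub m).mul_const m).sqrt
  rw [Metric.tendstoUniformly_iff]
  intro ε hε
  filter_upwards [hbound.eventually (gt_mem_nhds hε)] with n hn x
  exact (Real.abs_le_sqrt (sq_sub_dPot_dist_le hub (hμ n) x)).trans_lt hn

lemma IsQuasihypermetric.en_dist_le_sqrt_of_tendstoUniformly (hq : IsQuasihypermetric X)
    (hμ : ∀ n, μ n Set.univ = 1) {N : ℕ}
    (hN : ∀ n ≥ N, -en dist (μ N - μ n) (μ N - μ n) ≤ 1) {c : ℝ}
    (hunif : TendstoUniformly (fun n x => dPot dist (μ n) x) (fun _ => c) atTop)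
    {σ : SignedMeasure X} (hσ : σ Set.univ = 0) :
    en dist σ (μ N) ≤ √(-en dist σ σ) := by
  have hlim : Tendsto (fun n => en dist σ (μ n)) atTop (𝓝 0) := by
    have := tendsto_sInt_of_tendstoUniformly σ (fun n => continuous_dPot_dist (μ n))
      continuous_const hunif
    rw [sInt_const, hσ, mul_zero] at this
    exact this
  have hnear : ∀ n ≥ N, en dist σ (μ N) ≤ √(-en dist σ σ) + en dist σ (μ n) := by
    intro n hn
    have hCS := hq.sq_en_dist_le_mul hσ (τ := μ N - μ n) (by simp [hμ])
    have hσσ := hq σ hσ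
    have hcross : en dist σ (μ N - μ n) ≤ √(-en dist σ σ) :=
      Real.le_sqrt_of_sq_le (by nlinarith [hN n hn])
    rw [en_dist_sub_right] at hcross
    linarith
  simpa using ge_of_tendsto (tendsto_const_nhds.add hlim) (eventually_atTop.2 ⟨N, hnear⟩)

lemma IsQuasihypermetric.exists_en_dist_le_of_energy_cauchy (hq : IsQuasihypermetric X)
    (hμ : ∀ n, μ n Set.univ = 1)
    (hcau : ∀ ε > (0 : ℝ), ∃ N : ℕ, ∀ p ≥ N, ∀ q ≥ N, √(-en dist (μ p - μ q) (μ p - μ q)) < ε)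
    {c : ℝ} (hunif : TendstoUniformly (fun n x => dPot dist (μ n) x) (fun _ => c) atTop) :
    ∃ B, ∀ ν : SignedMeasure X, ν Set.univ = 1 → en dist ν ν ≤ B := by
  obtain ⟨N, hN⟩ := hcau 1 one_pos
  have hN' (n : ℕ) (hn : n ≥ N) : -en dist (μ N - μ n) (μ N - μ n) ≤ 1 := by
    linarith [(Real.sqrt_lt' one_pos).1 (hN N le_rfl n hn)]
  refine ⟨en dist (μ N) (μ N) + 1, fun ν hν => ?_⟩
  set σ := ν - μ N
  have hσ : σ Set.univ = 0 := by simp [σ, hν, hμ N]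
  have hcross := hq.en_dist_le_sqrt_of_tendstoUniformly hμ hN' hunif hσ
  have hexp := en_dist_add_smul_self (μ N) σ 1
  rw [one_smul, add_sub_cancel, en_dist_comm (μ N) σ] at hexp
  have hs := Real.sq_sqrt (neg_nonneg.2 (hq σ hσ))
  nlinarith [sq_nonneg (√(-en dist σ σ) - 1)]

end Sequences

lemma exists_seq_tendsto_of_isLUB {X : Type*} [MetricSpace X] [MeasurableSpace X] {m : ℝ}
    (hm : IsLUB (MSet X) m) :
    ∃ μ : ℕ → SignedMeasure X, (∀ n, μ n Set.univ = 1) ∧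
      Tendsto (fun n => en dist (μ n) (μ n)) atTop (𝓝 m) := by
  have hne : (MSet X).Nonempty := by
    by_contra h
    rw [Set.not_nonempty_iff_eq_empty] at h
    have := hm.2 (show m - 1 ∈ upperBounds (MSet X) by simp [h])
    linarith
  obtain ⟨u, -, -, hu, hmem⟩ := hm.exists_seq_monotone_tendsto hne
  choose μ hμ hμu using hmem
  exact ⟨μ, hμ, by simpa [hμu] using hu⟩

/-- For a compact quasihypermetric space the following are equivalent: `M(X) < ∞`;
there exists a maximal sequence in `M₁(X)`; there exists a `d`-invariant sequence in
`M₁(X)`. -/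
theorem stmt14 {X : Type*} [MetricSpace X] [CompactSpace X] [MeasurableSpace X] [BorelSpace X]
    (hq : ∀ ν : SignedMeasure X, ν Set.univ = (0 : ℝ) → en (fun x y => dist x y) ν ν ≤ 0) :
    ((∃ m : ℝ, IsLUB (MSet X) m) ↔
        (∃ m : ℝ, IsLUB (MSet X) m ∧
          ∃ μ : ℕ → SignedMeasure X, (∀ n, (μ n) Set.univ = (1 : ℝ)) ∧
            Filter.Tendsto (fun n => en (fun x y => dist x y) (μ n) (μ n))
              Filter.atTop (nhds m))) ∧
      ((∃ m : ℝ, IsLUB (MSet X) m) ↔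
        (∃ μ : ℕ → SignedMeasure X, (∀ n, (μ n) Set.univ = (1 : ℝ)) ∧
          (∀ ε > (0 : ℝ), ∃ N : ℕ, ∀ p ≥ N, ∀ q ≥ N,
            Real.sqrt (-(en (fun x y => dist x y) (μ p - μ q) (μ p - μ q))) < ε) ∧
          ∃ c : ℝ, TendstoUniformly (fun n x => dPot (fun x y => dist x y) (μ n) x)
            (fun _ => c) Filter.atTop)) := by
  have hq : IsQuasihypermetric X := hq
  have hub {m : ℝ} (hm : IsLUB (MSet X) m) (ν : SignedMeasure X) (hν : ν Set.univ = 1) :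
      en dist ν ν ≤ m := hm.1 ⟨ν, hν, rfl⟩
  refine ⟨⟨fun ⟨m, hm⟩ => ⟨m, hm, exists_seq_tendsto_of_isLUB hm⟩, fun ⟨m, hm, _⟩ => ⟨m, hm⟩⟩,
    ⟨fun ⟨m, hm⟩ => ?_, fun ⟨μ, hμ, hcau, c, hunif⟩ => ?_⟩⟩
  · obtain ⟨μ, hμ, hlim⟩ := exists_seq_tendsto_of_isLUB hm
    exact ⟨μ, hμ, energy_cauchy_of_tendsto (hub hm) hμ hlim, m,
      tendstoUniformly_dPot_dist_of_tendsto (hub hm) hμ hlim⟩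
  · obtain ⟨B, hB⟩ := hq.exists_en_dist_le_of_energy_cauchy hμ hcau hunif
    exact ⟨sSup (MSet X), isLUB_csSup ⟨_, μ 0, hμ 0, rfl⟩ ⟨B, fun r ⟨ν, hν, hr⟩ => hr ▸ hB ν hν⟩⟩
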